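/- The vector fields on ℝ⁴ (coordinates t, x₁, x₂, θ) given by L_m = -t^{m+1}∂_t - (m+1)t^m(x₁∂₁+x₂∂₂) - 2m t^m θ∂_θ, J_m = -t^m Σ_{ij} ε_{ij} x_i ∂_j, P^i_m = -t^{m+1}∂_i - (1/2)t^{m-1}Σ_j ε_{ij} x_j ∂_θ, Θ_m = -t^m ∂_θ satisfy the commutation relations of the algebra 𝔤̌, including [P^i_m, P^j_n] = ε_{ij}Θ_{m+n} and [L_m, Θ_n] = (2m-n)Θ_{m+n}. -/

import Mathlib

set_option maxHeartbeats 2000000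


noncomputable section

abbrev Pt := ℝ × ℝ × ℝ × ℝ  -- coordinates (t, x₁, x₂, θ)

/-- Partial derivative in `t`. -/
def dt (f : Pt → ℝ) (p : Pt) : ℝ := deriv (fun s => f (s, p.2.1, p.2.2.1, p.2.2.2)) p.1

/-- Partial derivative in `x₁`. -/
def d1 (f : Pt → ℝ) (p : Pt) : ℝ := deriv (fun s => f (p.1, s, p.2.2.1, p.2.2.2)) p.2.1

/-- Partial derivative in `x₂`. -/
def d2 (f : Pt → ℝ) (p : Pt) : ℝ := deriv (fun s => f (p.1, p.2.1, s, p.2.2.2)) p.2.2.1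

/-- Partial derivative in `θ`. -/
def dth (f : Pt → ℝ) (p : Pt) : ℝ := deriv (fun s => f (p.1, p.2.1, p.2.2.1, s)) p.2.2.2

/-- `ε_{12} = -ε_{21} = 1`. -/
def eps : Fin 2 → Fin 2 → ℤ := fun i j =>
  if i = 0 ∧ j = 1 then 1 else if i = 1 ∧ j = 0 then -1 else 0

/-- coordinate `xᵢ`. -/
def xc (i : Fin 2) (p : Pt) : ℝ := if i = 0 then p.2.1 else p.2.2.1

/-- `∂ᵢ`. -/
def dd (i : Fin 2) (f : Pt → ℝ) (p : Pt) : ℝ := if i = 0 then d1 f p else d2 f p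

/-- `L_m = -t^{m+1}∂_t - (m+1)t^m (x₁∂₁ + x₂∂₂) - 2m t^m θ∂_θ`. -/
def Lop (m : ℤ) (f : Pt → ℝ) (p : Pt) : ℝ :=
  -(p.1 ^ (m + 1)) * dt f p
    - ((m + 1 : ℤ) : ℝ) * p.1 ^ m * (p.2.1 * d1 f p + p.2.2.1 * d2 f p)
    - ((2 * m : ℤ) : ℝ) * p.1 ^ m * p.2.2.2 * dth f p

/-- `J_m = -t^m Σ_{ij} ε_{ij} x_i ∂_j`. -/
def Jop (m : ℤ) (f : Pt → ℝ) (p : Pt) : ℝ :=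
  -(p.1 ^ m) * ∑ i : Fin 2, ∑ j : Fin 2, ((eps i j : ℤ) : ℝ) * xc i p * dd j f p

/-- `P^i_m = -t^{m+1}∂_i - (1/2)t^{m-1} Σ_j ε_{ij} x_j ∂_θ`. -/
def Pop (i : Fin 2) (m : ℤ) (f : Pt → ℝ) (p : Pt) : ℝ :=
  -(p.1 ^ (m + 1)) * dd i f p
    - (1 / 2 : ℝ) * p.1 ^ (m - 1) * (∑ j : Fin 2, ((eps i j : ℤ) : ℝ) * xc j p) * dth f p

/-- `Θ_m = -t^m ∂_θ`. -/
def Thop (m : ℤ) (f : Pt → ℝ) (p : Pt) : ℝ := -(p.1 ^ m) * dth f p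

/-- Commutator of differential operators. -/
def vfComm (A B : (Pt → ℝ) → (Pt → ℝ)) (f : Pt → ℝ) (p : Pt) : ℝ :=
  A (B f) p - B (A f) p

-- ==================== auxiliary framework ====================

def et : Pt := (1,0,0,0)
def e1 : Pt := (0,1,0,0)
def e2 : Pt := (0,0,1,0)
def e3 : Pt := (0,0,0,1)

def one : Pt → ℝ := fun _ => 1
def X1 : Pt → ℝ := fun q => q.2.1
def X2 : Pt → ℝ := fun q => q.2.2.1
def X3 : Pt → ℝ := fun q => q.2.2.2

lemma one_diff {q : Pt} : DifferentiableAt ℝ one q := differentiableAt_const 1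
lemma X1_diff {q : Pt} : DifferentiableAt ℝ X1 q := differentiableAt_snd.fst
lemma X2_diff {q : Pt} : DifferentiableAt ℝ X2 q := differentiableAt_snd.snd.fst
lemma X3_diff {q : Pt} : DifferentiableAt ℝ X3 q := differentiableAt_snd.snd.snd

/-- coefficient shape `C t^k g`. -/
def cf (C : ℝ) (k : ℤ) (g : Pt → ℝ) : Pt → ℝ := fun q => C * q.1 ^ k * g q

lemma cf_app (C : ℝ) (k : ℤ) (g : Pt → ℝ) (p : Pt) : cf C k g p = C * p.1 ^ k * g p := rfl

lemma cf_diff {p : Pt} (hp : p.1 ≠ 0) (C : ℝ) (k : ℤ) {g : Pt → ℝ}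
    (hg : DifferentiableAt ℝ g p) : DifferentiableAt ℝ (cf C k g) p :=
  (((differentiableAt_fst.zpow (Or.inl hp)).const_mul C).mul hg)

lemma cf_fderiv {p : Pt} (hp : p.1 ≠ 0) (C : ℝ) (k : ℤ) {g : Pt → ℝ} {G : Pt →L[ℝ] ℝ}
    (hg : HasFDerivAt g G p) (v : Pt) :
    fderiv ℝ (cf C k g) p v = C * (((k:ℝ) * p.1^(k-1) * v.1) * g p + p.1^k * G v) := by
  have hz : HasFDerivAt (fun q : Pt => q.1 ^ k)
      (((k:ℝ) * p.1 ^ (k-1)) • ContinuousLinearMap.fst ℝ ℝ (ℝ×ℝ×ℝ)) p :=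
    (hasDerivAt_zpow k p.1 (Or.inl hp)).comp_hasFDerivAt p hasFDerivAt_fst
  have h2 := (hz.const_mul C).mul hg
  have h3 : fderiv ℝ (cf C k g) p = _ := h2.fderiv
  rw [h3]
  simp [smul_eq_mul]
  ring

lemma one_hasF (p : Pt) : HasFDerivAt one (0 : Pt →L[ℝ] ℝ) p := hasFDerivAt_const 1 p

lemma X1_hasF (p : Pt) : HasFDerivAt X1
    ((ContinuousLinearMap.fst ℝ ℝ (ℝ×ℝ)).comp (ContinuousLinearMap.snd ℝ ℝ (ℝ×ℝ×ℝ))) p :=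
  hasFDerivAt_fst.comp p hasFDerivAt_snd

lemma X2_hasF (p : Pt) : HasFDerivAt X2
    (((ContinuousLinearMap.fst ℝ ℝ ℝ).comp (ContinuousLinearMap.snd ℝ ℝ (ℝ×ℝ))).comp
      (ContinuousLinearMap.snd ℝ ℝ (ℝ×ℝ×ℝ))) p :=
  (hasFDerivAt_fst.comp p.2 hasFDerivAt_snd).comp p hasFDerivAt_snd

lemma X3_hasF (p : Pt) : HasFDerivAt X3
    (((ContinuousLinearMap.snd ℝ ℝ ℝ).comp (ContinuousLinearMap.snd ℝ ℝ (ℝ×ℝ))).comp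
      (ContinuousLinearMap.snd ℝ ℝ (ℝ×ℝ×ℝ))) p :=
  (hasFDerivAt_snd.comp p.2 hasFDerivAt_snd).comp p hasFDerivAt_snd

lemma cf_fderiv_one {p : Pt} (hp : p.1 ≠ 0) (C : ℝ) (k : ℤ) (v : Pt) :
    fderiv ℝ (cf C k one) p v = C * ((k:ℝ) * p.1^(k-1) * v.1) := by
  rw [cf_fderiv hp C k (one_hasF p) v]
  simp [one]

lemma cf_fderiv_X1 {p : Pt} (hp : p.1 ≠ 0) (C : ℝ) (k : ℤ) (v : Pt) :
    fderiv ℝ (cf C k X1) p v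
      = C * ((k:ℝ) * p.1^(k-1) * v.1 * p.2.1 + p.1^k * v.2.1) := by
  rw [cf_fderiv hp C k (X1_hasF p) v]
  simp [X1]

lemma cf_fderiv_X2 {p : Pt} (hp : p.1 ≠ 0) (C : ℝ) (k : ℤ) (v : Pt) :
    fderiv ℝ (cf C k X2) p v
      = C * ((k:ℝ) * p.1^(k-1) * v.1 * p.2.2.1 + p.1^k * v.2.2.1) := by
  rw [cf_fderiv hp C k (X2_hasF p) v]
  simp [X2]

lemma cf_fderiv_X3 {p : Pt} (hp : p.1 ≠ 0) (C : ℝ) (k : ℤ) (v : Pt) :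
    fderiv ℝ (cf C k X3) p v
      = C * ((k:ℝ) * p.1^(k-1) * v.1 * p.2.2.2 + p.1^k * v.2.2.2) := by
  rw [cf_fderiv hp C k (X3_hasF p) v]
  simp [X3]

/-- general coordinate vector field. -/
def VF (a b c d f : Pt → ℝ) : Pt → ℝ := fun p =>
  a p * fderiv ℝ f p et + b p * fderiv ℝ f p e1 + c p * fderiv ℝ f p e2 + d p * fderiv ℝ f p e3

lemma VF_apply (a b c d f : Pt → ℝ) (p : Pt) :
    VF a b c d f p = a p * fderiv ℝ f p et + b p * fderiv ℝ f p e1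
      + c p * fderiv ℝ f p e2 + d p * fderiv ℝ f p e3 := rfl

lemma pdF {f : Pt → ℝ} (hf : ContDiff ℝ (⊤ : ℕ∞) f) (p : Pt) (w : Pt) :
    HasFDerivAt (fun q => fderiv ℝ f q w)
      ((ContinuousLinearMap.apply ℝ ℝ w).comp (fderiv ℝ (fderiv ℝ f) p)) p :=
  (ContinuousLinearMap.apply ℝ ℝ w).hasFDerivAt.comp p
    ((hf.fderiv_right (m := (⊤ : ℕ∞)) (by simp)).differentiable (by simp) p).hasFDerivAt

lemma VF_hasFDerivAt {f : Pt → ℝ} (hf : ContDiff ℝ (⊤ : ℕ∞) f) {p : Pt} {a b c d : Pt → ℝ}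
    (ha : DifferentiableAt ℝ a p) (hb : DifferentiableAt ℝ b p)
    (hc : DifferentiableAt ℝ c p) (hd : DifferentiableAt ℝ d p) :
    HasFDerivAt (VF a b c d f)
      (((a p • ((ContinuousLinearMap.apply ℝ ℝ et).comp (fderiv ℝ (fderiv ℝ f) p))
          + fderiv ℝ f p et • fderiv ℝ a p)
        + (b p • ((ContinuousLinearMap.apply ℝ ℝ e1).comp (fderiv ℝ (fderiv ℝ f) p))
          + fderiv ℝ f p e1 • fderiv ℝ b p)
        + (c p • ((ContinuousLinearMap.apply ℝ ℝ e2).comp (fderiv ℝ (fderiv ℝ f) p))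
          + fderiv ℝ f p e2 • fderiv ℝ c p))
        + (d p • ((ContinuousLinearMap.apply ℝ ℝ e3).comp (fderiv ℝ (fderiv ℝ f) p))
          + fderiv ℝ f p e3 • fderiv ℝ d p)) p :=
  (((ha.hasFDerivAt.mul (pdF hf p et)).add (hb.hasFDerivAt.mul (pdF hf p e1))).add
      (hc.hasFDerivAt.mul (pdF hf p e2))).add (hd.hasFDerivAt.mul (pdF hf p e3))

lemma VF_diffAt {f : Pt → ℝ} (hf : ContDiff ℝ (⊤ : ℕ∞) f) {p : Pt} {a b c d : Pt → ℝ}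
    (ha : DifferentiableAt ℝ a p) (hb : DifferentiableAt ℝ b p)
    (hc : DifferentiableAt ℝ c p) (hd : DifferentiableAt ℝ d p) :
    DifferentiableAt ℝ (VF a b c d f) p :=
  (VF_hasFDerivAt hf ha hb hc hd).differentiableAt

lemma VF_fderiv_apply {f : Pt → ℝ} (hf : ContDiff ℝ (⊤ : ℕ∞) f) {p : Pt} {a b c d : Pt → ℝ}
    (ha : DifferentiableAt ℝ a p) (hb : DifferentiableAt ℝ b p)
    (hc : DifferentiableAt ℝ c p) (hd : DifferentiableAt ℝ d p) (v : Pt) :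
    fderiv ℝ (VF a b c d f) p v =
      (fderiv ℝ a p v * fderiv ℝ f p et + a p * fderiv ℝ (fderiv ℝ f) p v et)
      + (fderiv ℝ b p v * fderiv ℝ f p e1 + b p * fderiv ℝ (fderiv ℝ f) p v e1)
      + (fderiv ℝ c p v * fderiv ℝ f p e2 + c p * fderiv ℝ (fderiv ℝ f) p v e2)
      + (fderiv ℝ d p v * fderiv ℝ f p e3 + d p * fderiv ℝ (fderiv ℝ f) p v e3) := by
  rw [(VF_hasFDerivAt hf ha hb hc hd).fderiv]
  simp [smul_eq_mul]
  ring

/-- directional derivative of a scalar function by the vector field. -/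
def DV (a b c d g : Pt → ℝ) (p : Pt) : ℝ :=
  a p * fderiv ℝ g p et + b p * fderiv ℝ g p e1 + c p * fderiv ℝ g p e2 + d p * fderiv ℝ g p e3

lemma comm_key {f : Pt → ℝ} (hf : ContDiff ℝ (⊤ : ℕ∞) f) {p : Pt} {a b c d a' b' c' d' : Pt → ℝ}
    (ha : DifferentiableAt ℝ a p) (hb : DifferentiableAt ℝ b p)
    (hc : DifferentiableAt ℝ c p) (hd : DifferentiableAt ℝ d p)
    (ha' : DifferentiableAt ℝ a' p) (hb' : DifferentiableAt ℝ b' p)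
    (hc' : DifferentiableAt ℝ c' p) (hd' : DifferentiableAt ℝ d' p) :
    VF a b c d (VF a' b' c' d' f) p - VF a' b' c' d' (VF a b c d f) p =
      (DV a b c d a' p - DV a' b' c' d' a p) * fderiv ℝ f p et
      + (DV a b c d b' p - DV a' b' c' d' b p) * fderiv ℝ f p e1
      + (DV a b c d c' p - DV a' b' c' d' c p) * fderiv ℝ f p e2
      + (DV a b c d d' p - DV a' b' c' d' d p) * fderiv ℝ f p e3 := by
  have hs : ∀ v w : Pt, fderiv ℝ (fderiv ℝ f) p v w = fderiv ℝ (fderiv ℝ f) p w v :=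
    fun v w => (hf.contDiffAt.isSymmSndFDerivAt (by rw [minSmoothness_of_isRCLikeNormedField]; exact WithTop.coe_le_coe.mpr (le_top (a := (2 : ℕ∞))))) v w
  rw [VF_apply a b c d, VF_apply a' b' c' d']
  rw [VF_fderiv_apply hf ha' hb' hc' hd' et, VF_fderiv_apply hf ha' hb' hc' hd' e1,
    VF_fderiv_apply hf ha' hb' hc' hd' e2, VF_fderiv_apply hf ha' hb' hc' hd' e3,
    VF_fderiv_apply hf ha hb hc hd et, VF_fderiv_apply hf ha hb hc hd e1,
    VF_fderiv_apply hf ha hb hc hd e2, VF_fderiv_apply hf ha hb hc hd e3]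
  rw [hs e1 et, hs e2 et, hs e3 et, hs e2 e1, hs e3 e1, hs e3 e2]
  simp only [DV]
  ring

-- line lemmas
lemma dt_eq {g : Pt → ℝ} {p : Pt} (hg : DifferentiableAt ℝ g p) :
    dt g p = fderiv ℝ g p et := by
  have hl : HasDerivAt (fun s : ℝ => ((s, p.2.1, p.2.2.1, p.2.2.2) : Pt)) et p.1 := by
    simpa [et] using (hasDerivAt_id p.1).prodMk ((hasDerivAt_const p.1 p.2.1).prodMk
      ((hasDerivAt_const p.1 p.2.2.1).prodMk (hasDerivAt_const p.1 p.2.2.2)))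
  simpa [dt, Function.comp_def] using (hg.hasFDerivAt.comp_hasDerivAt p.1 hl).deriv

lemma d1_eq {g : Pt → ℝ} {p : Pt} (hg : DifferentiableAt ℝ g p) :
    d1 g p = fderiv ℝ g p e1 := by
  have hl : HasDerivAt (fun s : ℝ => ((p.1, s, p.2.2.1, p.2.2.2) : Pt)) e1 p.2.1 := by
    simpa [e1] using (hasDerivAt_const p.2.1 p.1).prodMk ((hasDerivAt_id p.2.1).prodMk
      ((hasDerivAt_const p.2.1 p.2.2.1).prodMk (hasDerivAt_const p.2.1 p.2.2.2)))
  simpa [d1, Function.comp_def] using (hg.hasFDerivAt.comp_hasDerivAt p.2.1 hl).deriv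

lemma d2_eq {g : Pt → ℝ} {p : Pt} (hg : DifferentiableAt ℝ g p) :
    d2 g p = fderiv ℝ g p e2 := by
  have hl : HasDerivAt (fun s : ℝ => ((p.1, p.2.1, s, p.2.2.2) : Pt)) e2 p.2.2.1 := by
    simpa [e2] using (hasDerivAt_const p.2.2.1 p.1).prodMk ((hasDerivAt_const p.2.2.1 p.2.1).prodMk
      ((hasDerivAt_id p.2.2.1).prodMk (hasDerivAt_const p.2.2.1 p.2.2.2)))
  simpa [d2, Function.comp_def] using (hg.hasFDerivAt.comp_hasDerivAt p.2.2.1 hl).deriv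

lemma dth_eq {g : Pt → ℝ} {p : Pt} (hg : DifferentiableAt ℝ g p) :
    dth g p = fderiv ℝ g p e3 := by
  have hl : HasDerivAt (fun s : ℝ => ((p.1, p.2.1, p.2.2.1, s) : Pt)) e3 p.2.2.2 := by
    simpa [e3] using (hasDerivAt_const p.2.2.2 p.1).prodMk ((hasDerivAt_const p.2.2.2 p.2.1).prodMk
      ((hasDerivAt_const p.2.2.2 p.2.2.1).prodMk (hasDerivAt_id p.2.2.2)))
  simpa [dth, Function.comp_def] using (hg.hasFDerivAt.comp_hasDerivAt p.2.2.2 hl).deriv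

-- operator ↔ VF bridges
def Z : Pt → ℝ := cf 0 0 one

lemma Lop_eq (m : ℤ) {g : Pt → ℝ} {p : Pt} (hg : DifferentiableAt ℝ g p) :
    Lop m g p = VF (cf (-1) (m+1) one) (cf (-((m:ℝ)+1)) m X1) (cf (-((m:ℝ)+1)) m X2)
      (cf (-(2*(m:ℝ))) m X3) g p := by
  simp only [Lop, VF, cf, one, X1, X2, X3, dt_eq hg, d1_eq hg, d2_eq hg, dth_eq hg]
  push_cast
  ring

lemma Jop_eq (m : ℤ) {g : Pt → ℝ} {p : Pt} (hg : DifferentiableAt ℝ g p) :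
    Jop m g p = VF Z (cf 1 m X2) (cf (-1) m X1) Z g p := by
  simp only [Jop, VF, Z, cf, one, X1, X2, Fin.sum_univ_two, eps, xc, dd,
    d1_eq hg, d2_eq hg]
  norm_num
  try ring

lemma Pop0_eq (m : ℤ) {g : Pt → ℝ} {p : Pt} (hg : DifferentiableAt ℝ g p) :
    Pop 0 m g p = VF Z (cf (-1) (m+1) one) Z (cf (-(1/2 : ℝ)) (m-1) X2) g p := by
  simp only [Pop, VF, Z, cf, one, X1, X2, X3, Fin.sum_univ_two, eps, xc, dd,
    d1_eq hg, dth_eq hg]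
  norm_num
  try ring

lemma Pop1_eq (m : ℤ) {g : Pt → ℝ} {p : Pt} (hg : DifferentiableAt ℝ g p) :
    Pop 1 m g p = VF Z Z (cf (-1) (m+1) one) (cf ((1/2 : ℝ)) (m-1) X1) g p := by
  simp only [Pop, VF, Z, cf, one, X1, X2, X3, Fin.sum_univ_two, eps, xc, dd,
    d2_eq hg, dth_eq hg]
  norm_num
  try ring

lemma Thop_eq (m : ℤ) {g : Pt → ℝ} {p : Pt} (hg : DifferentiableAt ℝ g p) :
    Thop m g p = VF Z Z Z (cf (-1) m one) g p := by
  simp only [Thop, VF, Z, cf, one, dth_eq hg]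
  ring

lemma Z_eqf : Z = fun _ => (0:ℝ) := funext fun q => by simp [Z, cf, one]
lemma Z_diff {q : Pt} : DifferentiableAt ℝ Z q := by rw [Z_eqf]; exact differentiableAt_const 0
lemma Z_app (p : Pt) : Z p = 0 := by simp [Z, cf, one]
lemma Z_fderiv (p : Pt) (v : Pt) : fderiv ℝ Z p v = 0 := by rw [Z_eqf]; simp
lemma eps00 : eps 0 0 = 0 := rfl
lemma eps01 : eps 0 1 = 1 := rfl
lemma eps10 : eps 1 0 = -1 := rfl
lemma eps11 : eps 1 1 = 0 := rfl

/-- The vector fields `L_m, J_m, P^i_m, Θ_m` on `ℝ⁴` satisfy the commutation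
relations of the novel algebra `𝔤̌`, including `[P^i_m, P^j_n] = ε_{ij}Θ_{m+n}`
and `[L_m, Θ_n] = (2m-n)Θ_{m+n}` (on smooth functions, at points with `t ≠ 0`). -/
theorem stmt15 (f : Pt → ℝ) (hf : ContDiff ℝ (⊤ : ℕ∞) f) (p : Pt) (hp : p.1 ≠ 0) :
    (∀ m n : ℤ, vfComm (Lop m) (Lop n) f p = ((m - n : ℤ) : ℝ) * Lop (m + n) f p) ∧
    (∀ m n : ℤ, vfComm (Lop m) (Jop n) f p = ((-n : ℤ) : ℝ) * Jop (m + n) f p) ∧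
    (∀ (m n : ℤ) (i : Fin 2),
      vfComm (Lop m) (Pop i n) f p = ((m - n : ℤ) : ℝ) * Pop i (m + n) f p) ∧
    (∀ (m n : ℤ) (i : Fin 2),
      vfComm (Jop m) (Pop i n) f p = ∑ j : Fin 2, ((eps i j : ℤ) : ℝ) * Pop j (m + n) f p) ∧
    (∀ (m n : ℤ) (i j : Fin 2),
      vfComm (Pop i m) (Pop j n) f p = ((eps i j : ℤ) : ℝ) * Thop (m + n) f p) ∧
    (∀ m n : ℤ, vfComm (Lop m) (Thop n) f p = ((2 * m - n : ℤ) : ℝ) * Thop (m + n) f p) ∧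
    (∀ m n : ℤ, vfComm (Jop m) (Jop n) f p = 0) ∧
    (∀ m n : ℤ, vfComm (Jop m) (Thop n) f p = 0) ∧
    (∀ (m n : ℤ) (i : Fin 2), vfComm (Pop i m) (Thop n) f p = 0) ∧
    (∀ m n : ℤ, vfComm (Thop m) (Thop n) f p = 0) := by
  have hdf : Differentiable ℝ f := hf.differentiable (by simp)
  refine ⟨?_, ?_, ?_, ?_, ?_, ?_, ?_, ?_, ?_, ?_⟩
  · intro m n
    have h1 : Lop n f = VF (cf (-1) (n+1) one) (cf (-((n:ℝ)+1)) n X1) (cf (-((n:ℝ)+1)) n X2) (cf (-(2*(n:ℝ))) n X3) f := funext fun q => Lop_eq n (hdf q)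
    have h2 : Lop m f = VF (cf (-1) (m+1) one) (cf (-((m:ℝ)+1)) m X1) (cf (-((m:ℝ)+1)) m X2) (cf (-(2*(m:ℝ))) m X3) f := funext fun q => Lop_eq m (hdf q)
    have hVn : DifferentiableAt ℝ (VF (cf (-1) (n+1) one) (cf (-((n:ℝ)+1)) n X1) (cf (-((n:ℝ)+1)) n X2) (cf (-(2*(n:ℝ))) n X3) f) p := VF_diffAt hf (cf_diff hp _ _ one_diff) (cf_diff hp _ _ X1_diff) (cf_diff hp _ _ X2_diff) (cf_diff hp _ _ X3_diff)
    have hVm : DifferentiableAt ℝ (VF (cf (-1) (m+1) one) (cf (-((m:ℝ)+1)) m X1) (cf (-((m:ℝ)+1)) m X2) (cf (-(2*(m:ℝ))) m X3) f) p := VF_diffAt hf (cf_diff hp _ _ one_diff) (cf_diff hp _ _ X1_diff) (cf_diff hp _ _ X2_diff) (cf_diff hp _ _ X3_diff)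
    show Lop m (Lop n f) p - Lop n (Lop m f) p = ((m - n : ℤ) : ℝ) * Lop (m + n) f p
    rw [h1, h2, Lop_eq m hVn, Lop_eq n hVm,
      comm_key hf (cf_diff hp _ _ one_diff) (cf_diff hp _ _ X1_diff) (cf_diff hp _ _ X2_diff) (cf_diff hp _ _ X3_diff) (cf_diff hp _ _ one_diff) (cf_diff hp _ _ X1_diff) (cf_diff hp _ _ X2_diff) (cf_diff hp _ _ X3_diff), Lop_eq (m+n) (hdf p)]
    simp only [DV, VF_apply, cf_app, Z_app, Z_fderiv, cf_fderiv_one hp, cf_fderiv_X1 hp,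
      cf_fderiv_X2 hp, cf_fderiv_X3 hp, one, X1, X2, X3, et, e1, e2, e3,
      eps00, eps01, eps10, eps11]
    push_cast
    try simp only [add_sub_cancel_right]
    try simp only [zpow_add₀ hp, zpow_sub₀ hp, zpow_one, zpow_zero]
    try field_simp
    try ring
  · intro m n
    have h1 : Jop n f = VF Z (cf 1 n X2) (cf (-1) n X1) Z f := funext fun q => Jop_eq n (hdf q)
    have h2 : Lop m f = VF (cf (-1) (m+1) one) (cf (-((m:ℝ)+1)) m X1) (cf (-((m:ℝ)+1)) m X2) (cf (-(2*(m:ℝ))) m X3) f := funext fun q => Lop_eq m (hdf q)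
    have hVn : DifferentiableAt ℝ (VF Z (cf 1 n X2) (cf (-1) n X1) Z f) p := VF_diffAt hf Z_diff (cf_diff hp _ _ X2_diff) (cf_diff hp _ _ X1_diff) Z_diff
    have hVm : DifferentiableAt ℝ (VF (cf (-1) (m+1) one) (cf (-((m:ℝ)+1)) m X1) (cf (-((m:ℝ)+1)) m X2) (cf (-(2*(m:ℝ))) m X3) f) p := VF_diffAt hf (cf_diff hp _ _ one_diff) (cf_diff hp _ _ X1_diff) (cf_diff hp _ _ X2_diff) (cf_diff hp _ _ X3_diff)
    show Lop m (Jop n f) p - Jop n (Lop m f) p = ((-n : ℤ) : ℝ) * Jop (m + n) f p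
    rw [h1, h2, Lop_eq m hVn, Jop_eq n hVm,
      comm_key hf (cf_diff hp _ _ one_diff) (cf_diff hp _ _ X1_diff) (cf_diff hp _ _ X2_diff) (cf_diff hp _ _ X3_diff) Z_diff (cf_diff hp _ _ X2_diff) (cf_diff hp _ _ X1_diff) Z_diff, Jop_eq (m+n) (hdf p)]
    simp only [DV, VF_apply, cf_app, Z_app, Z_fderiv, cf_fderiv_one hp, cf_fderiv_X1 hp,
      cf_fderiv_X2 hp, cf_fderiv_X3 hp, one, X1, X2, X3, et, e1, e2, e3,
      eps00, eps01, eps10, eps11]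
    push_cast
    try simp only [add_sub_cancel_right]
    try simp only [zpow_add₀ hp, zpow_sub₀ hp, zpow_one, zpow_zero]
    try field_simp
    try ring
  · intro m n i
    fin_cases i
    · have h1 : Pop 0 n f = VF Z (cf (-1) (n+1) one) Z (cf (-(1/2 : ℝ)) (n-1) X2) f := funext fun q => Pop0_eq n (hdf q)
      have h2 : Lop m f = VF (cf (-1) (m+1) one) (cf (-((m:ℝ)+1)) m X1) (cf (-((m:ℝ)+1)) m X2) (cf (-(2*(m:ℝ))) m X3) f := funext fun q => Lop_eq m (hdf q)
      have hVn : DifferentiableAt ℝ (VF Z (cf (-1) (n+1) one) Z (cf (-(1/2 : ℝ)) (n-1) X2) f) p := VF_diffAt hf Z_diff (cf_diff hp _ _ one_diff) Z_diff (cf_diff hp _ _ X2_diff)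
      have hVm : DifferentiableAt ℝ (VF (cf (-1) (m+1) one) (cf (-((m:ℝ)+1)) m X1) (cf (-((m:ℝ)+1)) m X2) (cf (-(2*(m:ℝ))) m X3) f) p := VF_diffAt hf (cf_diff hp _ _ one_diff) (cf_diff hp _ _ X1_diff) (cf_diff hp _ _ X2_diff) (cf_diff hp _ _ X3_diff)
      show Lop m (Pop 0 n f) p - Pop 0 n (Lop m f) p = ((m - n : ℤ) : ℝ) * Pop 0 (m + n) f p
      rw [h1, h2, Lop_eq m hVn, Pop0_eq n hVm,
        comm_key hf (cf_diff hp _ _ one_diff) (cf_diff hp _ _ X1_diff) (cf_diff hp _ _ X2_diff) (cf_diff hp _ _ X3_diff) Z_diff (cf_diff hp _ _ one_diff) Z_diff (cf_diff hp _ _ X2_diff), Pop0_eq (m+n) (hdf p)]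
      simp only [DV, VF_apply, cf_app, Z_app, Z_fderiv, cf_fderiv_one hp, cf_fderiv_X1 hp,
        cf_fderiv_X2 hp, cf_fderiv_X3 hp, one, X1, X2, X3, et, e1, e2, e3,
        eps00, eps01, eps10, eps11]
      push_cast
      try simp only [add_sub_cancel_right]
      try simp only [zpow_add₀ hp, zpow_sub₀ hp, zpow_one, zpow_zero]
      try field_simp
      try ring
    · have h1 : Pop 1 n f = VF Z Z (cf (-1) (n+1) one) (cf ((1/2 : ℝ)) (n-1) X1) f := funext fun q => Pop1_eq n (hdf q)
      have h2 : Lop m f = VF (cf (-1) (m+1) one) (cf (-((m:ℝ)+1)) m X1) (cf (-((m:ℝ)+1)) m X2) (cf (-(2*(m:ℝ))) m X3) f := funext fun q => Lop_eq m (hdf q)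
      have hVn : DifferentiableAt ℝ (VF Z Z (cf (-1) (n+1) one) (cf ((1/2 : ℝ)) (n-1) X1) f) p := VF_diffAt hf Z_diff Z_diff (cf_diff hp _ _ one_diff) (cf_diff hp _ _ X1_diff)
      have hVm : DifferentiableAt ℝ (VF (cf (-1) (m+1) one) (cf (-((m:ℝ)+1)) m X1) (cf (-((m:ℝ)+1)) m X2) (cf (-(2*(m:ℝ))) m X3) f) p := VF_diffAt hf (cf_diff hp _ _ one_diff) (cf_diff hp _ _ X1_diff) (cf_diff hp _ _ X2_diff) (cf_diff hp _ _ X3_diff)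
      show Lop m (Pop 1 n f) p - Pop 1 n (Lop m f) p = ((m - n : ℤ) : ℝ) * Pop 1 (m + n) f p
      rw [h1, h2, Lop_eq m hVn, Pop1_eq n hVm,
        comm_key hf (cf_diff hp _ _ one_diff) (cf_diff hp _ _ X1_diff) (cf_diff hp _ _ X2_diff) (cf_diff hp _ _ X3_diff) Z_diff Z_diff (cf_diff hp _ _ one_diff) (cf_diff hp _ _ X1_diff), Pop1_eq (m+n) (hdf p)]
      simp only [DV, VF_apply, cf_app, Z_app, Z_fderiv, cf_fderiv_one hp, cf_fderiv_X1 hp,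
        cf_fderiv_X2 hp, cf_fderiv_X3 hp, one, X1, X2, X3, et, e1, e2, e3,
        eps00, eps01, eps10, eps11]
      push_cast
      try simp only [add_sub_cancel_right]
      try simp only [zpow_add₀ hp, zpow_sub₀ hp, zpow_one, zpow_zero]
      try field_simp
      try ring
  · intro m n i
    fin_cases i
    · have h1 : Pop 0 n f = VF Z (cf (-1) (n+1) one) Z (cf (-(1/2 : ℝ)) (n-1) X2) f := funext fun q => Pop0_eq n (hdf q)
      have h2 : Jop m f = VF Z (cf 1 m X2) (cf (-1) m X1) Z f := funext fun q => Jop_eq m (hdf q)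
      have hVn : DifferentiableAt ℝ (VF Z (cf (-1) (n+1) one) Z (cf (-(1/2 : ℝ)) (n-1) X2) f) p := VF_diffAt hf Z_diff (cf_diff hp _ _ one_diff) Z_diff (cf_diff hp _ _ X2_diff)
      have hVm : DifferentiableAt ℝ (VF Z (cf 1 m X2) (cf (-1) m X1) Z f) p := VF_diffAt hf Z_diff (cf_diff hp _ _ X2_diff) (cf_diff hp _ _ X1_diff) Z_diff
      show Jop m (Pop 0 n f) p - Pop 0 n (Jop m f) p = ∑ j : Fin 2, ((eps 0 j : ℤ) : ℝ) * Pop j (m + n) f p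
      rw [h1, h2, Jop_eq m hVn, Pop0_eq n hVm,
        comm_key hf Z_diff (cf_diff hp _ _ X2_diff) (cf_diff hp _ _ X1_diff) Z_diff Z_diff (cf_diff hp _ _ one_diff) Z_diff (cf_diff hp _ _ X2_diff), Fin.sum_univ_two (f := fun j => ((eps 0 j : ℤ) : ℝ) * Pop j (m + n) f p), Pop0_eq (m+n) (hdf p), Pop1_eq (m+n) (hdf p)]
      simp only [DV, VF_apply, cf_app, Z_app, Z_fderiv, cf_fderiv_one hp, cf_fderiv_X1 hp,
        cf_fderiv_X2 hp, cf_fderiv_X3 hp, one, X1, X2, X3, et, e1, e2, e3,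
        eps00, eps01, eps10, eps11]
      push_cast
      try simp only [add_sub_cancel_right]
      try simp only [zpow_add₀ hp, zpow_sub₀ hp, zpow_one, zpow_zero]
      try field_simp
      try ring
    · have h1 : Pop 1 n f = VF Z Z (cf (-1) (n+1) one) (cf ((1/2 : ℝ)) (n-1) X1) f := funext fun q => Pop1_eq n (hdf q)
      have h2 : Jop m f = VF Z (cf 1 m X2) (cf (-1) m X1) Z f := funext fun q => Jop_eq m (hdf q)
      have hVn : DifferentiableAt ℝ (VF Z Z (cf (-1) (n+1) one) (cf ((1/2 : ℝ)) (n-1) X1) f) p := VF_diffAt hf Z_diff Z_diff (cf_diff hp _ _ one_diff) (cf_diff hp _ _ X1_diff)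
      have hVm : DifferentiableAt ℝ (VF Z (cf 1 m X2) (cf (-1) m X1) Z f) p := VF_diffAt hf Z_diff (cf_diff hp _ _ X2_diff) (cf_diff hp _ _ X1_diff) Z_diff
      show Jop m (Pop 1 n f) p - Pop 1 n (Jop m f) p = ∑ j : Fin 2, ((eps 1 j : ℤ) : ℝ) * Pop j (m + n) f p
      rw [h1, h2, Jop_eq m hVn, Pop1_eq n hVm,
        comm_key hf Z_diff (cf_diff hp _ _ X2_diff) (cf_diff hp _ _ X1_diff) Z_diff Z_diff Z_diff (cf_diff hp _ _ one_diff) (cf_diff hp _ _ X1_diff), Fin.sum_univ_two (f := fun j => ((eps 1 j : ℤ) : ℝ) * Pop j (m + n) f p), Pop0_eq (m+n) (hdf p), Pop1_eq (m+n) (hdf p)]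
      simp only [DV, VF_apply, cf_app, Z_app, Z_fderiv, cf_fderiv_one hp, cf_fderiv_X1 hp,
        cf_fderiv_X2 hp, cf_fderiv_X3 hp, one, X1, X2, X3, et, e1, e2, e3,
        eps00, eps01, eps10, eps11]
      push_cast
      try simp only [add_sub_cancel_right]
      try simp only [zpow_add₀ hp, zpow_sub₀ hp, zpow_one, zpow_zero]
      try field_simp
      try ring
  · intro m n i j
    fin_cases i <;> fin_cases j
    · have h1 : Pop 0 n f = VF Z (cf (-1) (n+1) one) Z (cf (-(1/2 : ℝ)) (n-1) X2) f := funext fun q => Pop0_eq n (hdf q)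
      have h2 : Pop 0 m f = VF Z (cf (-1) (m+1) one) Z (cf (-(1/2 : ℝ)) (m-1) X2) f := funext fun q => Pop0_eq m (hdf q)
      have hVn : DifferentiableAt ℝ (VF Z (cf (-1) (n+1) one) Z (cf (-(1/2 : ℝ)) (n-1) X2) f) p := VF_diffAt hf Z_diff (cf_diff hp _ _ one_diff) Z_diff (cf_diff hp _ _ X2_diff)
      have hVm : DifferentiableAt ℝ (VF Z (cf (-1) (m+1) one) Z (cf (-(1/2 : ℝ)) (m-1) X2) f) p := VF_diffAt hf Z_diff (cf_diff hp _ _ one_diff) Z_diff (cf_diff hp _ _ X2_diff)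
      show Pop 0 m (Pop 0 n f) p - Pop 0 n (Pop 0 m f) p = ((eps 0 0 : ℤ) : ℝ) * Thop (m + n) f p
      rw [h1, h2, Pop0_eq m hVn, Pop0_eq n hVm,
        comm_key hf Z_diff (cf_diff hp _ _ one_diff) Z_diff (cf_diff hp _ _ X2_diff) Z_diff (cf_diff hp _ _ one_diff) Z_diff (cf_diff hp _ _ X2_diff), Thop_eq (m+n) (hdf p)]
      simp only [DV, VF_apply, cf_app, Z_app, Z_fderiv, cf_fderiv_one hp, cf_fderiv_X1 hp,
        cf_fderiv_X2 hp, cf_fderiv_X3 hp, one, X1, X2, X3, et, e1, e2, e3,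
        eps00, eps01, eps10, eps11]
      push_cast
      try simp only [add_sub_cancel_right]
      try simp only [zpow_add₀ hp, zpow_sub₀ hp, zpow_one, zpow_zero]
      try field_simp
      try ring
    · have h1 : Pop 1 n f = VF Z Z (cf (-1) (n+1) one) (cf ((1/2 : ℝ)) (n-1) X1) f := funext fun q => Pop1_eq n (hdf q)
      have h2 : Pop 0 m f = VF Z (cf (-1) (m+1) one) Z (cf (-(1/2 : ℝ)) (m-1) X2) f := funext fun q => Pop0_eq m (hdf q)
      have hVn : DifferentiableAt ℝ (VF Z Z (cf (-1) (n+1) one) (cf ((1/2 : ℝ)) (n-1) X1) f) p := VF_diffAt hf Z_diff Z_diff (cf_diff hp _ _ one_diff) (cf_diff hp _ _ X1_diff)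
      have hVm : DifferentiableAt ℝ (VF Z (cf (-1) (m+1) one) Z (cf (-(1/2 : ℝ)) (m-1) X2) f) p := VF_diffAt hf Z_diff (cf_diff hp _ _ one_diff) Z_diff (cf_diff hp _ _ X2_diff)
      show Pop 0 m (Pop 1 n f) p - Pop 1 n (Pop 0 m f) p = ((eps 0 1 : ℤ) : ℝ) * Thop (m + n) f p
      rw [h1, h2, Pop0_eq m hVn, Pop1_eq n hVm,
        comm_key hf Z_diff (cf_diff hp _ _ one_diff) Z_diff (cf_diff hp _ _ X2_diff) Z_diff Z_diff (cf_diff hp _ _ one_diff) (cf_diff hp _ _ X1_diff), Thop_eq (m+n) (hdf p)]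
      simp only [DV, VF_apply, cf_app, Z_app, Z_fderiv, cf_fderiv_one hp, cf_fderiv_X1 hp,
        cf_fderiv_X2 hp, cf_fderiv_X3 hp, one, X1, X2, X3, et, e1, e2, e3,
        eps00, eps01, eps10, eps11]
      push_cast
      try simp only [add_sub_cancel_right]
      try simp only [zpow_add₀ hp, zpow_sub₀ hp, zpow_one, zpow_zero]
      try field_simp
      try ring
    · have h1 : Pop 0 n f = VF Z (cf (-1) (n+1) one) Z (cf (-(1/2 : ℝ)) (n-1) X2) f := funext fun q => Pop0_eq n (hdf q)
      have h2 : Pop 1 m f = VF Z Z (cf (-1) (m+1) one) (cf ((1/2 : ℝ)) (m-1) X1) f := funext fun q => Pop1_eq m (hdf q)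
      have hVn : DifferentiableAt ℝ (VF Z (cf (-1) (n+1) one) Z (cf (-(1/2 : ℝ)) (n-1) X2) f) p := VF_diffAt hf Z_diff (cf_diff hp _ _ one_diff) Z_diff (cf_diff hp _ _ X2_diff)
      have hVm : DifferentiableAt ℝ (VF Z Z (cf (-1) (m+1) one) (cf ((1/2 : ℝ)) (m-1) X1) f) p := VF_diffAt hf Z_diff Z_diff (cf_diff hp _ _ one_diff) (cf_diff hp _ _ X1_diff)
      show Pop 1 m (Pop 0 n f) p - Pop 0 n (Pop 1 m f) p = ((eps 1 0 : ℤ) : ℝ) * Thop (m + n) f p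
      rw [h1, h2, Pop1_eq m hVn, Pop0_eq n hVm,
        comm_key hf Z_diff Z_diff (cf_diff hp _ _ one_diff) (cf_diff hp _ _ X1_diff) Z_diff (cf_diff hp _ _ one_diff) Z_diff (cf_diff hp _ _ X2_diff), Thop_eq (m+n) (hdf p)]
      simp only [DV, VF_apply, cf_app, Z_app, Z_fderiv, cf_fderiv_one hp, cf_fderiv_X1 hp,
        cf_fderiv_X2 hp, cf_fderiv_X3 hp, one, X1, X2, X3, et, e1, e2, e3,
        eps00, eps01, eps10, eps11]
      push_cast
      try simp only [add_sub_cancel_right]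
      try simp only [zpow_add₀ hp, zpow_sub₀ hp, zpow_one, zpow_zero]
      try field_simp
      try ring
    · have h1 : Pop 1 n f = VF Z Z (cf (-1) (n+1) one) (cf ((1/2 : ℝ)) (n-1) X1) f := funext fun q => Pop1_eq n (hdf q)
      have h2 : Pop 1 m f = VF Z Z (cf (-1) (m+1) one) (cf ((1/2 : ℝ)) (m-1) X1) f := funext fun q => Pop1_eq m (hdf q)
      have hVn : DifferentiableAt ℝ (VF Z Z (cf (-1) (n+1) one) (cf ((1/2 : ℝ)) (n-1) X1) f) p := VF_diffAt hf Z_diff Z_diff (cf_diff hp _ _ one_diff) (cf_diff hp _ _ X1_diff)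
      have hVm : DifferentiableAt ℝ (VF Z Z (cf (-1) (m+1) one) (cf ((1/2 : ℝ)) (m-1) X1) f) p := VF_diffAt hf Z_diff Z_diff (cf_diff hp _ _ one_diff) (cf_diff hp _ _ X1_diff)
      show Pop 1 m (Pop 1 n f) p - Pop 1 n (Pop 1 m f) p = ((eps 1 1 : ℤ) : ℝ) * Thop (m + n) f p
      rw [h1, h2, Pop1_eq m hVn, Pop1_eq n hVm,
        comm_key hf Z_diff Z_diff (cf_diff hp _ _ one_diff) (cf_diff hp _ _ X1_diff) Z_diff Z_diff (cf_diff hp _ _ one_diff) (cf_diff hp _ _ X1_diff), Thop_eq (m+n) (hdf p)]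
      simp only [DV, VF_apply, cf_app, Z_app, Z_fderiv, cf_fderiv_one hp, cf_fderiv_X1 hp,
        cf_fderiv_X2 hp, cf_fderiv_X3 hp, one, X1, X2, X3, et, e1, e2, e3,
        eps00, eps01, eps10, eps11]
      push_cast
      try simp only [add_sub_cancel_right]
      try simp only [zpow_add₀ hp, zpow_sub₀ hp, zpow_one, zpow_zero]
      try field_simp
      try ring
  · intro m n
    have h1 : Thop n f = VF Z Z Z (cf (-1) n one) f := funext fun q => Thop_eq n (hdf q)
    have h2 : Lop m f = VF (cf (-1) (m+1) one) (cf (-((m:ℝ)+1)) m X1) (cf (-((m:ℝ)+1)) m X2) (cf (-(2*(m:ℝ))) m X3) f := funext fun q => Lop_eq m (hdf q)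
    have hVn : DifferentiableAt ℝ (VF Z Z Z (cf (-1) n one) f) p := VF_diffAt hf Z_diff Z_diff Z_diff (cf_diff hp _ _ one_diff)
    have hVm : DifferentiableAt ℝ (VF (cf (-1) (m+1) one) (cf (-((m:ℝ)+1)) m X1) (cf (-((m:ℝ)+1)) m X2) (cf (-(2*(m:ℝ))) m X3) f) p := VF_diffAt hf (cf_diff hp _ _ one_diff) (cf_diff hp _ _ X1_diff) (cf_diff hp _ _ X2_diff) (cf_diff hp _ _ X3_diff)
    show Lop m (Thop n f) p - Thop n (Lop m f) p = ((2 * m - n : ℤ) : ℝ) * Thop (m + n) f p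
    rw [h1, h2, Lop_eq m hVn, Thop_eq n hVm,
      comm_key hf (cf_diff hp _ _ one_diff) (cf_diff hp _ _ X1_diff) (cf_diff hp _ _ X2_diff) (cf_diff hp _ _ X3_diff) Z_diff Z_diff Z_diff (cf_diff hp _ _ one_diff), Thop_eq (m+n) (hdf p)]
    simp only [DV, VF_apply, cf_app, Z_app, Z_fderiv, cf_fderiv_one hp, cf_fderiv_X1 hp,
      cf_fderiv_X2 hp, cf_fderiv_X3 hp, one, X1, X2, X3, et, e1, e2, e3,
      eps00, eps01, eps10, eps11]
    push_cast
    try simp only [add_sub_cancel_right]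
    try simp only [zpow_add₀ hp, zpow_sub₀ hp, zpow_one, zpow_zero]
    try field_simp
    try ring
  · intro m n
    have h1 : Jop n f = VF Z (cf 1 n X2) (cf (-1) n X1) Z f := funext fun q => Jop_eq n (hdf q)
    have h2 : Jop m f = VF Z (cf 1 m X2) (cf (-1) m X1) Z f := funext fun q => Jop_eq m (hdf q)
    have hVn : DifferentiableAt ℝ (VF Z (cf 1 n X2) (cf (-1) n X1) Z f) p := VF_diffAt hf Z_diff (cf_diff hp _ _ X2_diff) (cf_diff hp _ _ X1_diff) Z_diff
    have hVm : DifferentiableAt ℝ (VF Z (cf 1 m X2) (cf (-1) m X1) Z f) p := VF_diffAt hf Z_diff (cf_diff hp _ _ X2_diff) (cf_diff hp _ _ X1_diff) Z_diff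
    show Jop m (Jop n f) p - Jop n (Jop m f) p = (0:ℝ)
    rw [h1, h2, Jop_eq m hVn, Jop_eq n hVm,
      comm_key hf Z_diff (cf_diff hp _ _ X2_diff) (cf_diff hp _ _ X1_diff) Z_diff Z_diff (cf_diff hp _ _ X2_diff) (cf_diff hp _ _ X1_diff) Z_diff]
    simp only [DV, VF_apply, cf_app, Z_app, Z_fderiv, cf_fderiv_one hp, cf_fderiv_X1 hp,
      cf_fderiv_X2 hp, cf_fderiv_X3 hp, one, X1, X2, X3, et, e1, e2, e3,
      eps00, eps01, eps10, eps11]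
    push_cast
    try simp only [add_sub_cancel_right]
    try simp only [zpow_add₀ hp, zpow_sub₀ hp, zpow_one, zpow_zero]
    try field_simp
    try ring
  · intro m n
    have h1 : Thop n f = VF Z Z Z (cf (-1) n one) f := funext fun q => Thop_eq n (hdf q)
    have h2 : Jop m f = VF Z (cf 1 m X2) (cf (-1) m X1) Z f := funext fun q => Jop_eq m (hdf q)
    have hVn : DifferentiableAt ℝ (VF Z Z Z (cf (-1) n one) f) p := VF_diffAt hf Z_diff Z_diff Z_diff (cf_diff hp _ _ one_diff)
    have hVm : DifferentiableAt ℝ (VF Z (cf 1 m X2) (cf (-1) m X1) Z f) p := VF_diffAt hf Z_diff (cf_diff hp _ _ X2_diff) (cf_diff hp _ _ X1_diff) Z_diff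
    show Jop m (Thop n f) p - Thop n (Jop m f) p = (0:ℝ)
    rw [h1, h2, Jop_eq m hVn, Thop_eq n hVm,
      comm_key hf Z_diff (cf_diff hp _ _ X2_diff) (cf_diff hp _ _ X1_diff) Z_diff Z_diff Z_diff Z_diff (cf_diff hp _ _ one_diff)]
    simp only [DV, VF_apply, cf_app, Z_app, Z_fderiv, cf_fderiv_one hp, cf_fderiv_X1 hp,
      cf_fderiv_X2 hp, cf_fderiv_X3 hp, one, X1, X2, X3, et, e1, e2, e3,
      eps00, eps01, eps10, eps11]
    push_cast
    try simp only [add_sub_cancel_right]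
    try simp only [zpow_add₀ hp, zpow_sub₀ hp, zpow_one, zpow_zero]
    try field_simp
    try ring
  · intro m n i
    fin_cases i
    · have h1 : Thop n f = VF Z Z Z (cf (-1) n one) f := funext fun q => Thop_eq n (hdf q)
      have h2 : Pop 0 m f = VF Z (cf (-1) (m+1) one) Z (cf (-(1/2 : ℝ)) (m-1) X2) f := funext fun q => Pop0_eq m (hdf q)
      have hVn : DifferentiableAt ℝ (VF Z Z Z (cf (-1) n one) f) p := VF_diffAt hf Z_diff Z_diff Z_diff (cf_diff hp _ _ one_diff)
      have hVm : DifferentiableAt ℝ (VF Z (cf (-1) (m+1) one) Z (cf (-(1/2 : ℝ)) (m-1) X2) f) p := VF_diffAt hf Z_diff (cf_diff hp _ _ one_diff) Z_diff (cf_diff hp _ _ X2_diff)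
      show Pop 0 m (Thop n f) p - Thop n (Pop 0 m f) p = (0:ℝ)
      rw [h1, h2, Pop0_eq m hVn, Thop_eq n hVm,
        comm_key hf Z_diff (cf_diff hp _ _ one_diff) Z_diff (cf_diff hp _ _ X2_diff) Z_diff Z_diff Z_diff (cf_diff hp _ _ one_diff)]
      simp only [DV, VF_apply, cf_app, Z_app, Z_fderiv, cf_fderiv_one hp, cf_fderiv_X1 hp,
        cf_fderiv_X2 hp, cf_fderiv_X3 hp, one, X1, X2, X3, et, e1, e2, e3,
        eps00, eps01, eps10, eps11]
      push_cast
      try simp only [add_sub_cancel_right]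
      try simp only [zpow_add₀ hp, zpow_sub₀ hp, zpow_one, zpow_zero]
      try field_simp
      try ring
    · have h1 : Thop n f = VF Z Z Z (cf (-1) n one) f := funext fun q => Thop_eq n (hdf q)
      have h2 : Pop 1 m f = VF Z Z (cf (-1) (m+1) one) (cf ((1/2 : ℝ)) (m-1) X1) f := funext fun q => Pop1_eq m (hdf q)
      have hVn : DifferentiableAt ℝ (VF Z Z Z (cf (-1) n one) f) p := VF_diffAt hf Z_diff Z_diff Z_diff (cf_diff hp _ _ one_diff)
      have hVm : DifferentiableAt ℝ (VF Z Z (cf (-1) (m+1) one) (cf ((1/2 : ℝ)) (m-1) X1) f) p := VF_diffAt hf Z_diff Z_diff (cf_diff hp _ _ one_diff) (cf_diff hp _ _ X1_diff)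
      show Pop 1 m (Thop n f) p - Thop n (Pop 1 m f) p = (0:ℝ)
      rw [h1, h2, Pop1_eq m hVn, Thop_eq n hVm,
        comm_key hf Z_diff Z_diff (cf_diff hp _ _ one_diff) (cf_diff hp _ _ X1_diff) Z_diff Z_diff Z_diff (cf_diff hp _ _ one_diff)]
      simp only [DV, VF_apply, cf_app, Z_app, Z_fderiv, cf_fderiv_one hp, cf_fderiv_X1 hp,
        cf_fderiv_X2 hp, cf_fderiv_X3 hp, one, X1, X2, X3, et, e1, e2, e3,
        eps00, eps01, eps10, eps11]
      push_cast
      try simp only [add_sub_cancel_right]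
      try simp only [zpow_add₀ hp, zpow_sub₀ hp, zpow_one, zpow_zero]
      try field_simp
      try ring
  · intro m n
    have h1 : Thop n f = VF Z Z Z (cf (-1) n one) f := funext fun q => Thop_eq n (hdf q)
    have h2 : Thop m f = VF Z Z Z (cf (-1) m one) f := funext fun q => Thop_eq m (hdf q)
    have hVn : DifferentiableAt ℝ (VF Z Z Z (cf (-1) n one) f) p := VF_diffAt hf Z_diff Z_diff Z_diff (cf_diff hp _ _ one_diff)
    have hVm : DifferentiableAt ℝ (VF Z Z Z (cf (-1) m one) f) p := VF_diffAt hf Z_diff Z_diff Z_diff (cf_diff hp _ _ one_diff)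
    show Thop m (Thop n f) p - Thop n (Thop m f) p = (0:ℝ)
    rw [h1, h2, Thop_eq m hVn, Thop_eq n hVm,
      comm_key hf Z_diff Z_diff Z_diff (cf_diff hp _ _ one_diff) Z_diff Z_diff Z_diff (cf_diff hp _ _ one_diff)]
    simp only [DV, VF_apply, cf_app, Z_app, Z_fderiv, cf_fderiv_one hp, cf_fderiv_X1 hp,
      cf_fderiv_X2 hp, cf_fderiv_X3 hp, one, X1, X2, X3, et, e1, e2, e3,
      eps00, eps01, eps10, eps11]
    push_cast
    try simp only [add_sub_cancel_right]
    try simp only [zpow_add₀ hp, zpow_sub₀ hp, zpow_one, zpow_zero]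
    try field_simp
    try ring


end
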